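/- arXiv:2407.19091 — 2 statements merged into one kernel-verified Lean document; each statement's English description precedes it below -/
import Mathlib

section
/- Let w := (w_n)_{n∈ℕ} be a bounded sequence of scalars in 𝕂. The unilateral weighted backward shift B_w : (x₁,x₂,x₃,…) ∈ c₀(ℕ) ↦ (w₁x₂, w₂x₃, …) ∈ c₀(ℕ) is Li-Yorke chaotic if and only if sup{ |w_i ⋯ w_j| : i, j ∈ ℕ, i ≤ j } = ∞. -/
open Filter Topology MeasureTheory ENNReal

noncomputable section

def LiYorkePair {M : Type*} [PseudoMetricSpace M] (g : M → M) (x y : M) : Prop :=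
  Filter.liminf (fun n : ℕ => edist (g^[n] x) (g^[n] y)) Filter.atTop = 0 ∧
  0 < Filter.limsup (fun n : ℕ => edist (g^[n] x) (g^[n] y)) Filter.atTop

def LiYorkeChaotic {M : Type*} [PseudoMetricSpace M] (g : M → M) : Prop :=
  ∃ S : Set M, ¬ S.Countable ∧ S.Pairwise (LiYorkePair g)

def DenselyLiYorkeChaotic {M : Type*} [PseudoMetricSpace M] (g : M → M) : Prop :=
  ∃ S : Set M, Dense S ∧ ¬ S.Countable ∧ S.Pairwise (LiYorkePair g)

open scoped ZeroAtInfty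

/-! For a linear operator, Li–Yorke chaos amounts to a semi-irregular vector `v`, i.e.
`liminf ‖Tⁿ v‖ = 0 < limsup ‖Tⁿ v‖`: a pair `(x, y)` is Li–Yorke exactly when `x - y` is
semi-irregular, and then the real line through `v` is an uncountable scrambled set.

For the weighted backward shift, `(Tⁿ x) m = w m ⋯ w (m + n - 1) * x (m + n)`. If all these
weight products are bounded by `A`, then `‖Tⁿ v‖ ≤ A ‖Tᵐ v‖` for `m ≤ n`, so `liminf = 0` forces
`limsup = 0`. If they are unbounded, pick blocks `[mₖ, eₖ)` whose products `Pₖ` grow so fast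
that `‖Pⱼ‖ ≥ (k + 2) * C ^ (eₖ + 1)` for `j > k` (`C` bounds the weights), and let `z` carry the
spike `Pₖ⁻¹` at `eₖ`. Then `‖T^(eₖ - mₖ) z‖ ≥ 1`, while `‖T^(eₖ + 1) z‖ ≤ 1 / (k + 2)`. -/

section SemiIrregular

variable {𝕂 E : Type*} [RCLike 𝕂] [SeminormedAddCommGroup E] [NormedSpace 𝕂 E]

def IsSemiIrregular (g : E → E) (v : E) : Prop :=
  liminf (fun n ↦ ‖g^[n] v‖ₑ) atTop = 0 ∧ 0 < limsup (fun n ↦ ‖g^[n] v‖ₑ) atTop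

theorem isSemiIrregular_of_tendsto_comp {g : E → E} {v : E} {φ : ℕ → ℕ}
    (hφ : Tendsto φ atTop atTop) (h0 : Tendsto (fun k ↦ ‖g^[φ k] v‖) atTop (𝓝 0))
    {ε : ℝ} (hε : 0 < ε) (h1 : ∃ᶠ n in atTop, ε ≤ ‖g^[n] v‖) : IsSemiIrregular g v := by
  refine ⟨le_antisymm ?_ bot_le, ?_⟩
  · have h0' : Tendsto (fun k ↦ ‖g^[φ k] v‖ₑ) atTop (𝓝 0) := by
      simpa only [ofReal_norm, ENNReal.ofReal_zero] using ENNReal.tendsto_ofReal h0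
    exact (hφ.liminf_le_liminf_comp).trans_eq h0'.liminf_eq
  · refine (ENNReal.ofReal_pos.2 hε).trans_le (le_limsup_of_frequently_le ?_)
    exact h1.mono fun n hn ↦ by simpa only [ofReal_norm] using ENNReal.ofReal_le_ofReal hn

theorem liYorkePair_iff_isSemiIrregular_sub (L : E →ₗ[𝕂] E) (x y : E) :
    LiYorkePair L x y ↔ IsSemiIrregular L (x - y) := by
  simp only [LiYorkePair, IsSemiIrregular, edist_eq_enorm_sub, ← Module.End.coe_pow, map_sub]

theorem IsSemiIrregular.smul {L : E →ₗ[𝕂] E} {v : E} (hv : IsSemiIrregular L v) {c : 𝕂}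
    (hc : c ≠ 0) : IsSemiIrregular L (c • v) := by
  simp only [IsSemiIrregular, ← Module.End.coe_pow, map_smul, enorm_smul,
    ENNReal.liminf_const_mul_of_ne_top enorm_ne_top,
    ENNReal.limsup_const_mul_of_ne_top enorm_ne_top] at hv ⊢
  exact ⟨by rw [hv.1, mul_zero], ENNReal.mul_pos (enorm_ne_zero.2 hc) hv.2.ne'⟩

theorem IsSemiIrregular.ne_zero {L : E →ₗ[𝕂] E} {v : E} (hv : IsSemiIrregular L v) : v ≠ 0 := by
  rintro rfl
  simp only [IsSemiIrregular, ← Module.End.coe_pow, map_zero, liminf_const, limsup_const] at hv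
  exact hv.2.ne' hv.1

theorem liYorkeChaotic_iff_exists_isSemiIrregular (L : E →ₗ[𝕂] E) :
    LiYorkeChaotic L ↔ ∃ v, IsSemiIrregular L v := by
  constructor
  · rintro ⟨S, hS, hSL⟩
    obtain ⟨x, hx, y, hy, hxy⟩ := Set.not_subsingleton_iff.1 fun h ↦ hS h.countable
    exact ⟨x - y, (liYorkePair_iff_isSemiIrregular_sub L x y).1 (hSL hx hy hxy)⟩
  · rintro ⟨v, hv⟩
    have hinj : Function.Injective fun t : ℝ ↦ (t : 𝕂) • v :=
      (smul_left_injective 𝕂 hv.ne_zero).comp RCLike.ofReal_injective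
    refine ⟨Set.range fun t : ℝ ↦ (t : 𝕂) • v, fun h ↦ not_countable (α := ℝ) ?_, ?_⟩
    · simpa [Set.countable_univ_iff] using h.preimage hinj
    · rintro _ ⟨s, rfl⟩ _ ⟨t, rfl⟩ hst
      rw [liYorkePair_iff_isSemiIrregular_sub, ← sub_smul]
      have hst' : s ≠ t := ne_of_apply_ne (fun t : ℝ ↦ (t : 𝕂) • v) hst
      exact hv.smul (sub_ne_zero.2 (RCLike.ofReal_injective.ne hst'))

end SemiIrregular

theorem limsup_le_mul_liminf_of_le_mul {u : ℕ → ℝ≥0∞} {B : ℝ≥0∞} (hB : B ≠ ⊤)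
    (hu : ∀ m n, m ≤ n → u n ≤ B * u m) : limsup u atTop ≤ B * liminf u atTop := by
  rw [← ENNReal.liminf_const_mul_of_ne_top hB]
  exact le_liminf_of_le (by isBoundedDefault) <| Eventually.of_forall fun m ↦
    limsup_le_of_le (by isBoundedDefault) (eventually_atTop.2 ⟨m, hu m⟩)

theorem ZeroAtInftyContinuousMap.norm_le_iff {α β : Type*} [TopologicalSpace α]
    [SeminormedAddCommGroup β] {f : C₀(α, β)} {C : ℝ} (hC : 0 ≤ C) :
    ‖f‖ ≤ C ↔ ∀ x, ‖f x‖ ≤ C := by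
  rw [← norm_toBCF_eq_norm]
  exact BoundedContinuousFunction.norm_le hC

theorem ZeroAtInftyContinuousMap.norm_apply_le {α β : Type*} [TopologicalSpace α]
    [SeminormedAddCommGroup β] (f : C₀(α, β)) (x : α) : ‖f x‖ ≤ ‖f‖ :=
  (norm_le_iff (norm_nonneg f)).1 le_rfl x

theorem exists_zeroAtInfty_extend {β : Type*} [TopologicalSpace β] [Zero β] {e : ℕ → ℕ}
    (he : Function.Injective e) {g : ℕ → β} (hg : Tendsto g atTop (𝓝 0)) :
    ∃ z : C₀(ℕ, β), (∀ k, z (e k) = g k) ∧ ∀ n ∉ Set.range e, z n = 0 := by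
  have hz : Tendsto (Function.extend e g 0) (cocompact ℕ) (𝓝 0) := by
    rw [cocompact_eq_cofinite]
    intro U hU
    have hfin : (g ⁻¹' U)ᶜ.Finite := by
      rw [← Nat.cofinite_eq_atTop] at hg
      exact hg hU
    refine (hfin.image e).subset fun n hn ↦ ?_
    by_cases hne : ∃ k, e k = n
    · obtain ⟨k, rfl⟩ := hne
      exact ⟨k, by simpa [he.extend_apply] using hn, rfl⟩
    · exact absurd (by simpa [Function.extend_apply' _ _ _ hne] using mem_of_mem_nhds hU) hn
  refine ⟨⟨⟨Function.extend e g 0, continuous_of_discreteTopology⟩, hz⟩,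
    he.extend_apply g 0, fun n hn ↦ ?_⟩
  exact Function.extend_apply' _ _ _ fun ⟨k, hk⟩ ↦ hn ⟨k, hk⟩

section WeightedShift

open Finset

variable {𝕂 : Type*} [RCLike 𝕂]

def weightProd (w : ℕ → 𝕂) (m n : ℕ) : 𝕂 := ∏ t ∈ Ico m (m + n), w t

theorem norm_weightProd_le {w : ℕ → 𝕂} {C : ℝ} (hw : ∀ n, ‖w n‖ ≤ C) (m n : ℕ) :
    ‖weightProd w m n‖ ≤ C ^ n :=
  calc ‖weightProd w m n‖ ≤ ∏ t ∈ Ico m (m + n), ‖w t‖ := norm_prod_le _ _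
    _ ≤ ∏ _t ∈ Ico m (m + n), C := prod_le_prod (fun _ _ ↦ norm_nonneg _) fun t _ ↦ hw t
    _ = C ^ n := by simp

theorem prod_Icc_eq_weightProd (w : ℕ → 𝕂) {i j : ℕ} (hij : i ≤ j) :
    ∏ t ∈ Icc i j, w t = weightProd w i (j + 1 - i) := by
  rw [weightProd, Nat.add_sub_cancel' (by omega), Ico_add_one_right_eq_Icc]

theorem iSup_nnnorm_prod_Icc_eq_top_iff (w : ℕ → 𝕂) :
    (⨆ (i : ℕ) (j : ℕ) (_ : i ≤ j), (‖∏ t ∈ Icc i j, w t‖₊ : ℝ≥0∞)) = ⊤ ↔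
      ∀ A : ℝ, ∃ m n, A < ‖weightProd w m n‖ := by
  constructor
  · intro h A
    have hA := ENNReal.ofReal_lt_top (r := A)
    rw [← h] at hA
    simp only [lt_iSup_iff] at hA
    obtain ⟨i, j, hij, hA⟩ := hA
    rw [← enorm_eq_nnnorm, ← ofReal_norm, ENNReal.ofReal_lt_ofReal_iff'] at hA
    exact ⟨i, j + 1 - i, prod_Icc_eq_weightProd w hij ▸ hA.1⟩
  · intro h
    refine ENNReal.eq_top_of_forall_nnreal_le fun r ↦ ?_
    obtain ⟨m, n, hmn⟩ := h (max r 1)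
    have hn : n ≠ 0 := by
      rintro rfl
      simp [weightProd] at hmn
    have hprod : ∏ t ∈ Icc m (m + n - 1), w t = weightProd w m n := by
      rw [prod_Icc_eq_weightProd w (by omega)]
      congr 1
      omega
    calc (r : ℝ≥0∞) ≤ ‖∏ t ∈ Icc m (m + n - 1), w t‖₊ := by
          refine ENNReal.coe_le_coe.2 ?_
          rw [← NNReal.coe_le_coe, coe_nnnorm, hprod]
          exact (le_max_left _ _).trans hmn.le
      _ ≤ _ := le_iSup₂_of_le m (m + n - 1) (le_iSup_iff.2 fun _ h ↦ h (by omega))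

theorem lt_of_pow_lt_norm_weightProd {w : ℕ → 𝕂} {C : ℝ} (hC : 1 ≤ C) (hw : ∀ n, ‖w n‖ ≤ C)
    {N m n : ℕ} (h : C ^ N < ‖weightProd w m n‖) : N < n := by
  by_contra! hn
  exact (h.trans_le (norm_weightProd_le hw m n)).not_ge (pow_le_pow_right₀ hC hn)

theorem exists_seq_norm_weightProd_gt {w : ℕ → 𝕂} (C : ℝ)
    (hunb : ∀ A : ℝ, ∃ m n, A < ‖weightProd w m n‖) :
    ∃ m n : ℕ → ℕ, 1 < ‖weightProd w (m 0) (n 0)‖ ∧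
      ∀ k, (k + 2) * C ^ (m k + n k + 1) < ‖weightProd w (m (k + 1)) (n (k + 1))‖ := by
  choose M N hMN using hunb
  let A : ℕ → ℝ := fun k ↦ Nat.rec 1 (fun k a ↦ (k + 2) * C ^ (M a + N a + 1)) k
  exact ⟨fun k ↦ M (A k), fun k ↦ N (A k), hMN 1, fun k ↦ hMN _⟩

theorem exists_weightProd_blocks {w : ℕ → 𝕂} {C : ℝ} (hC : 1 ≤ C) (hw : ∀ n, ‖w n‖ ≤ C)
    (hunb : ∀ A : ℝ, ∃ m n, A < ‖weightProd w m n‖) :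
    ∃ m n : ℕ → ℕ, StrictMono (fun k ↦ m k + n k) ∧
      (∀ k : ℕ, (k + 1 : ℝ) ≤ ‖weightProd w (m k) (n k)‖) ∧
      ∀ k j : ℕ, k < j → (k + 2) * C ^ (m k + n k + 1) ≤ ‖weightProd w (m j) (n j)‖ := by
  obtain ⟨m, n, h0, hstep⟩ := exists_seq_norm_weightProd_gt C hunb
  have hpow (i : ℕ) : 1 ≤ C ^ i := one_le_pow₀ hC
  have he : StrictMono (fun k ↦ m k + n k) := strictMono_nat_of_lt_succ fun k ↦ by
    have := lt_of_pow_lt_norm_weightProd hC hw <|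
      lt_of_le_of_lt (le_mul_of_one_le_left (by positivity) (by linarith)) (hstep k)
    omega
  refine ⟨m, n, he, fun k ↦ ?_, fun k j hkj ↦ ?_⟩
  · cases k with
    | zero => simpa using h0.le
    | succ k =>
      push_cast
      nlinarith [hstep k, hpow (m k + n k + 1)]
  · obtain ⟨i, rfl⟩ := Nat.exists_eq_add_of_lt hkj
    have hmono : m k + n k ≤ m (k + i) + n (k + i) := he.monotone (Nat.le_add_right k i)
    calc (k + 2) * C ^ (m k + n k + 1) ≤ ((k + i : ℕ) + 2) * C ^ (m (k + i) + n (k + i) + 1) := by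
          gcongr
          exact_mod_cast Nat.le_add_right k i
      _ ≤ _ := (hstep (k + i)).le

def IsWeightedBackwardShift (w : ℕ → 𝕂) (T : C₀(ℕ, 𝕂) → C₀(ℕ, 𝕂)) : Prop :=
  ∀ x n, T x n = w n * x (n + 1)

namespace IsWeightedBackwardShift

variable {w : ℕ → 𝕂} {T : C₀(ℕ, 𝕂) → C₀(ℕ, 𝕂)} (hT : IsWeightedBackwardShift w T)
include hT

theorem iterate_apply (n : ℕ) (x : C₀(ℕ, 𝕂)) (m : ℕ) :
    T^[n] x m = weightProd w m n * x (m + n) := by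
  induction n generalizing x with
  | zero => simp [weightProd]
  | succ n ih =>
    rw [Function.iterate_succ_apply, ih, hT, weightProd, weightProd, ← add_assoc,
      prod_Ico_succ_top (Nat.le_add_right m n), mul_assoc]

theorem exists_linearMap : ∃ L : C₀(ℕ, 𝕂) →ₗ[𝕂] C₀(ℕ, 𝕂), ⇑L = T :=
  ⟨IsLinearMap.mk' T ⟨fun x y ↦ by ext n; simp [hT _ _, mul_add],
    fun c x ↦ by ext n; simp [hT _ _, mul_left_comm]⟩, rfl⟩

theorem norm_iterate_le {A : ℝ} (hA : ∀ m n, ‖weightProd w m n‖ ≤ A) (n : ℕ) (x : C₀(ℕ, 𝕂)) :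
    ‖T^[n] x‖ ≤ A * ‖x‖ := by
  have hA₀ : 0 ≤ A := zero_le_one.trans (by simpa [weightProd] using hA 0 0)
  refine (ZeroAtInftyContinuousMap.norm_le_iff (by positivity)).2 fun m ↦ ?_
  rw [hT.iterate_apply, norm_mul]
  exact mul_le_mul (hA m n) (x.norm_apply_le _) (norm_nonneg _) hA₀

theorem not_isSemiIrregular {A : ℝ} (hA : ∀ m n, ‖weightProd w m n‖ ≤ A) (v : C₀(ℕ, 𝕂)) :
    ¬ IsSemiIrregular T v := by
  rintro ⟨hinf, hsup⟩
  have hA₀ : 0 ≤ A := zero_le_one.trans (by simpa [weightProd] using hA 0 0)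
  have hle : ∀ m n, m ≤ n → ‖T^[n] v‖ₑ ≤ ENNReal.ofReal A * ‖T^[m] v‖ₑ := by
    intro m n hmn
    obtain ⟨k, rfl⟩ := Nat.exists_eq_add_of_le hmn
    rw [add_comm, Function.iterate_add_apply, ← ofReal_norm, ← ofReal_norm,
      ← ENNReal.ofReal_mul hA₀]
    exact ENNReal.ofReal_le_ofReal (hT.norm_iterate_le hA k _)
  have := limsup_le_mul_liminf_of_le_mul ENNReal.ofReal_ne_top hle
  rw [hinf, mul_zero] at this
  exact hsup.not_ge this

-- After `e k + 1` steps, only the values of `z` at `e j` with `j > k` are left.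
theorem norm_iterate_le_of_support {C : ℝ} (hw : ∀ n, ‖w n‖ ≤ C) {e : ℕ → ℕ} (he : StrictMono e)
    {z : C₀(ℕ, 𝕂)} (hz : ∀ n ∉ Set.range e, z n = 0) {k : ℕ} {ε : ℝ} (hε : 0 ≤ ε)
    (hzε : ∀ j, k < j → ‖z (e j)‖ ≤ ε) : ‖T^[e k + 1] z‖ ≤ C ^ (e k + 1) * ε := by
  have hC : 0 ≤ C := (norm_nonneg _).trans (hw 0)
  refine (ZeroAtInftyContinuousMap.norm_le_iff (by positivity)).2 fun i ↦ ?_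
  rw [hT.iterate_apply, norm_mul]
  by_cases hi : i + (e k + 1) ∈ Set.range e
  · obtain ⟨j, hj⟩ := hi
    rw [← hj]
    exact mul_le_mul (norm_weightProd_le hw _ _) (hzε j (he.lt_iff_lt.1 (by omega)))
      (norm_nonneg _) (by positivity)
  · rw [hz _ hi, norm_zero, mul_zero]
    positivity

theorem exists_isSemiIrregular (hw : ∃ C, ∀ n, ‖w n‖ ≤ C)
    (hunb : ∀ A : ℝ, ∃ m n, A < ‖weightProd w m n‖) : ∃ v, IsSemiIrregular T v := by
  obtain ⟨C, hC, hwC⟩ : ∃ C, 1 ≤ C ∧ ∀ n, ‖w n‖ ≤ C := by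
    obtain ⟨C, hC⟩ := hw
    exact ⟨max C 1, le_max_right _ _, fun n ↦ (hC n).trans (le_max_left _ _)⟩
  obtain ⟨m, n, he, hP, hPe⟩ := exists_weightProd_blocks hC hwC hunb
  set e : ℕ → ℕ := fun k ↦ m k + n k
  set P : ℕ → 𝕂 := fun k ↦ weightProd w (m k) (n k)
  have hP₀ (k : ℕ) : 0 < ‖P k‖ := lt_of_lt_of_le (by positivity) (hP k)
  have hPinv : Tendsto (fun k ↦ (P k)⁻¹) atTop (𝓝 0) := by
    rw [tendsto_zero_iff_norm_tendsto_zero]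
    simp only [norm_inv]
    exact tendsto_inv_atTop_zero.comp <| tendsto_atTop_mono hP <|
      tendsto_atTop_add_const_right _ _ tendsto_natCast_atTop_atTop
  obtain ⟨z, hz, hz₀⟩ := exists_zeroAtInfty_extend he.injective hPinv
  -- `T^[n k]` moves the spike `(P k)⁻¹` of `z` at `e k` down to `m k`, multiplying it by `P k`.
  have hlow (k : ℕ) : 1 ≤ ‖T^[n k] z‖ := by
    calc 1 = ‖T^[n k] z (m k)‖ := by
          rw [hT.iterate_apply, hz k, mul_inv_cancel₀ (norm_pos_iff.1 (hP₀ k)), norm_one]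
      _ ≤ _ := (T^[n k] z).norm_apply_le _
  have hup (k : ℕ) : ‖T^[e k + 1] z‖ ≤ (k + 2 : ℝ)⁻¹ := by
    refine (hT.norm_iterate_le_of_support hwC he hz₀ (ε := ((k + 2) * C ^ (e k + 1))⁻¹)
      (by positivity) fun j hkj ↦ ?_).trans_eq (by field_simp)
    rw [hz j, norm_inv]
    exact inv_anti₀ (by positivity) (hPe k j hkj)
  refine ⟨z, isSemiIrregular_of_tendsto_comp (φ := fun k ↦ e k + 1) ?_ ?_ one_pos ?_⟩
  · exact tendsto_atTop_mono (fun k ↦ Nat.le_succ _) he.tendsto_atTop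
  · refine squeeze_zero (fun _ ↦ norm_nonneg _) hup ?_
    exact tendsto_inv_atTop_zero.comp <|
      tendsto_atTop_add_const_right _ _ tendsto_natCast_atTop_atTop
  · refine frequently_atTop.2 fun N ↦ ?_
    obtain ⟨k, hk⟩ := exists_nat_gt (C ^ N)
    exact ⟨n k, (lt_of_pow_lt_norm_weightProd hC hwC (hk.trans_le (by linarith [hP k]))).le,
      hlow k⟩

end IsWeightedBackwardShift

end WeightedShift

theorem unilateral_shift_c0_liYorke_iff
    {𝕂 : Type} [RCLike 𝕂] (w : ℕ → 𝕂) (hwb : ∃ C : ℝ, ∀ n, ‖w n‖ ≤ C)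
    (T : ZeroAtInftyContinuousMap ℕ 𝕂 → ZeroAtInftyContinuousMap ℕ 𝕂)
    (hT : ∀ x n, T x n = w n * x (n + 1)) :
    LiYorkeChaotic T ↔
      (⨆ (i : ℕ) (j : ℕ) (_ : i ≤ j), (‖∏ t ∈ Finset.Icc i j, w t‖₊ : ℝ≥0∞)) = ⊤ := by
  have hshift : IsWeightedBackwardShift w T := hT
  obtain ⟨L, rfl⟩ := hshift.exists_linearMap
  rw [liYorkeChaotic_iff_exists_isSemiIrregular, iSup_nnnorm_prod_Icc_eq_top_iff]
  refine ⟨fun ⟨v, hv⟩ A ↦ ?_, hshift.exists_isSemiIrregular hwb⟩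
  by_contra! hA
  exact hshift.not_isSemiIrregular hA v hv

end
end

section
/- Let X be a Fréchet sequence space over ℤ in which the sequence (e_n)_{n∈ℤ} of canonical vectors is a basis, let w := (w_n)_{n∈ℤ} be a sequence of nonzero scalars, and suppose the bilateral weighted backward shift B_w((x_n)_{n∈ℤ}) := (w_n x_{n+1})_{n∈ℤ} is a well-defined (continuous linear) operator on X. If the sequence (w_{-n} ⋯ w_{-1} e_{-n})_{n∈ℕ} has a subsequence converging to zero in X, then either (a) B_w is densely Li-Yorke chaotic, or (b) lim_{n→∞} B_wⁿ x = 0 for every x ∈ X. -/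
/-!
Let `N` be the subspace of vectors whose orbit tends to `0`; when `N ≠ X` we build a dense
scrambled set. The hypothesis says `B^{n_j} e₀ → 0`. Since `B` maps each `e_k` to a nonzero
multiple of `e_{k-1}`, a diagonal argument gives one subsequence `(m_i)` with `B^{m_i} e_k → 0`
for every `k`, so the vectors `x` with `B^{m_i} x → 0` form a dense subspace. By Baire's theorem
the vectors having `0` as a cluster point of `(B^{m_i} x)` form a residual set, and one of them,
`y`, lies outside `N`. Along a further subsequence also `B^{m_i} y → 0`, so `y` lies in a dense
subspace `Y` on which `B^{m_i} → 0`. The scrambled set consists of vectors `τ y + r`, with `r` in a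
countable dense subset of `Y` and small reals `τ` chosen so that no difference of two of them
lies in `N`. Every difference then lies in `Y \ N`, and by translation invariance of the metric
the distance between the two orbits has liminf `0` and positive limsup.
-/

open Filter Topology MeasureTheory ENNReal

noncomputable section

theorem residual_setOf_mapClusterPt {X Y : Type*} [TopologicalSpace X] [PseudoMetricSpace Y]
    {T : ℕ → X → Y} (hT : ∀ i, Continuous (T i)) {D : Set X} (hD : Dense D) {y : Y}
    (hDy : ∀ x ∈ D, Tendsto (fun i => T i x) atTop (𝓝 y)) :
    {x | MapClusterPt y atTop fun i => T i x} ∈ residual X := by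
  have : {x | MapClusterPt y atTop fun i => T i x} =
      ⋂ k : ℕ, ⋂ b : ℕ, ⋃ i ≥ b, T i ⁻¹' Metric.ball y (1 / (k + 1)) := by
    ext x
    simp [Metric.nhds_basis_ball_inv_nat_succ.mapClusterPt_iff_frequently, frequently_atTop]
  rw [this]
  refine countable_iInter_mem.2 fun k => countable_iInter_mem.2 fun b =>
    residual_of_dense_open (isOpen_biUnion fun i _ => Metric.isOpen_ball.preimage (hT i))
      (hD.mono fun x hx => ?_)
  have hball := Metric.ball_mem_nhds y (Nat.one_div_pos_of_nat (n := k))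
  obtain ⟨i, hi, hb⟩ := (((hDy x hx).eventually hball).and (eventually_ge_atTop b)).exists
  exact Set.mem_biUnion hb hi

theorem AddSubgroup.exists_mem_residual_notMem {G : Type*} [TopologicalSpace G] [AddGroup G]
    [ContinuousAdd G] [BaireSpace G] (N : AddSubgroup G) {x₀ : G} (hx₀ : x₀ ∉ N) {A : Set G}
    (hA : A ∈ residual G) : ∃ y ∈ A, y ∉ N := by
  have hA' : (· + x₀) ⁻¹' A ∈ residual G := by
    rwa [← (Homeomorph.addRight x₀).residual_map_eq] at hA
  obtain ⟨y, hyA, hyA'⟩ := (dense_of_mem_residual (inter_mem hA hA')).nonempty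
  by_cases hy : y ∈ N
  · refine ⟨y + x₀, hyA', fun h => hx₀ ?_⟩
    simpa using N.add_mem (N.neg_mem hy) h
  · exact ⟨y, hyA, hy⟩

theorem exists_strictMono_forall_tendsto_diagonal {α Y : Type*} [Countable α]
    [TopologicalSpace Y] [FirstCountableTopology Y] {u : α → ℕ → ℕ → Y} {y : Y}
    (h : ∀ a, ∀ᶠ K in atTop, Tendsto (u a K) atTop (𝓝 y)) :
    ∃ φ : ℕ → ℕ, StrictMono φ ∧ ∀ a, Tendsto (fun i => u a i (φ i)) atTop (𝓝 y) := by
  obtain ⟨e, he⟩ := exists_injective_nat α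
  obtain ⟨U, hU⟩ := (𝓝 y).exists_antitone_basis
  choose K hK using fun a => eventually_atTop.1 (h a)
  have hstage : ∀ i : ℕ, ∀ᶠ j in atTop, ∀ a ∈ {a | e a ≤ i ∧ K a ≤ i}, u a i j ∈ U i := by
    intro i
    refine (eventually_all_finite ?_).2 fun a ha => hK a i ha.2 (hU.mem i)
    exact ((Set.finite_Iic i).preimage he.injOn).subset fun a ha => ha.1
  obtain ⟨φ, hφ, hφu⟩ := extraction_forall_of_eventually hstage
  refine ⟨φ, hφ, fun a => (tendsto_add_atTop_iff_nat (e a + K a)).1 (hU.tendsto fun i => ?_)⟩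
  exact hU.antitone (Nat.le_add_right i _) (hφu (i + (e a + K a)) a ⟨by omega, by omega⟩)

section TendstoZero

variable {R X Y : Type*} [Semiring R] [TopologicalSpace X] [AddCommMonoid X] [Module R X]
  [TopologicalSpace Y] [AddCommMonoid Y] [Module R Y] [ContinuousAdd Y] [ContinuousConstSMul R Y]

def tendstoZeroSubmodule {ι : Type*} (T : ι → X →L[R] Y) (l : Filter ι) : Submodule R X where
  carrier := {x | Tendsto (fun i => T i x) l (𝓝 0)}
  add_mem' {x y} hx hy := by simpa using hx.add hy
  zero_mem' := by simpa using tendsto_const_nhds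
  smul_mem' c x hx := by simpa using hx.const_smul c

theorem mem_tendstoZeroSubmodule {ι : Type*} {T : ι → X →L[R] Y} {l : Filter ι} {x : X} :
    x ∈ tendstoZeroSubmodule T l ↔ Tendsto (fun i => T i x) l (𝓝 0) :=
  Iff.rfl

theorem tendstoZeroSubmodule_le_comp {ι κ : Type*} (T : ι → X →L[R] Y) {l : Filter ι}
    {l' : Filter κ} {ψ : κ → ι} (hψ : Tendsto ψ l' l) :
    tendstoZeroSubmodule T l ≤ tendstoZeroSubmodule (T ∘ ψ) l' :=
  fun _ hx => hx.comp hψ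

end TendstoZero

theorem ContinuousLinearMap.map_mem_tendstoZeroSubmodule {R X : Type*} [Semiring R]
    [TopologicalSpace X] [AddCommMonoid X] [Module R X] [ContinuousAdd X]
    [ContinuousConstSMul R X] {ι : Type*} {T : ι → X →L[R] X}
    {l : Filter ι} (S : X →L[R] X) (hS : ∀ i, Commute S (T i)) {x : X}
    (hx : x ∈ tendstoZeroSubmodule T l) : S x ∈ tendstoZeroSubmodule T l := by
  have := (S.continuous.tendsto 0).comp hx
  simp only [map_zero] at this
  refine this.congr fun i => ?_
  simp only [Function.comp_apply, ← mul_apply_eq_comp, (hS i).eq]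

theorem exists_uncountable_family_sub_notMem {ι : Type*} [Countable ι] [Nonempty ι]
    {Γ : Set ℝ} (hΓ : Γ.Countable) (δ : ι → ℝ) (hδ : ∀ a, 0 < δ a) :
    ∃ (I : Type) (_ : Uncountable I) (k : I → ι) (τ : I → ℝ), Function.Surjective k ∧
      (∀ i, |τ i| < δ (k i)) ∧ Pairwise fun i j => τ i - τ j ∉ Γ := by
  -- `τ` picks small representatives of distinct cosets of a countable dense `ℚ`-subspace
  -- `W ⊇ Γ` of `ℝ`.
  have : Countable ↥(insert 1 Γ) := (hΓ.insert 1).to_subtype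
  set W := Submodule.span ℚ (Set.range ((↑) : ↥(insert (1 : ℝ) Γ) → ℝ))
  have hΓW : Γ ⊆ W := fun t ht =>
    Submodule.subset_span ⟨⟨t, Set.mem_insert_of_mem 1 ht⟩, rfl⟩
  have hWd : Dense (W : Set ℝ) := Rat.denseRange_cast.mono <| by
    rintro _ ⟨q, rfl⟩
    simpa [Rat.cast_def] using
      W.smul_mem q (Submodule.subset_span ⟨⟨1, Set.mem_insert 1 Γ⟩, rfl⟩)
  obtain ⟨rep, hrep⟩ : ∃ rep : ℝ ⧸ W → ℝ, ∀ c, Submodule.Quotient.mk (rep c) = c :=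
    ⟨_, Function.surjInv_eq W.mkQ_surjective⟩
  have : Uncountable (ℝ ⧸ W) := by
    by_contra hQ
    have := not_uncountable_iff.1 hQ
    have hinj : Function.Injective fun x : ℝ =>
        ((Submodule.Quotient.mk x : ℝ ⧸ W), (⟨x - rep (Submodule.Quotient.mk x),
          (Submodule.Quotient.eq W).1 (hrep _).symm⟩ : W)) := by
      intro x y hxy
      simp only [Prod.mk.injEq, Subtype.mk.injEq] at hxy
      rw [hxy.1] at hxy
      linarith [hxy.2]
    exact not_countable (α := ℝ) hinj.countable
  obtain ⟨k, hk⟩ : ∃ k : ℝ ⧸ W → ι, Function.Surjective k := by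
    obtain ⟨g, hg⟩ := exists_surjective_nat ι
    exact ⟨g ∘ Function.invFun (Infinite.natEmbedding _),
      hg.comp (Function.invFun_surjective (Infinite.natEmbedding _).injective)⟩
  have hcoset : ∀ c : ℝ ⧸ W, ∀ ε > 0,
      ∃ t, |t| < ε ∧ (Submodule.Quotient.mk t : ℝ ⧸ W) = c := by
    intro c ε hε
    obtain ⟨v, hvW, hv⟩ := hWd.exists_mem_open Metric.isOpen_ball
      ⟨-rep c, Metric.mem_ball_self hε⟩
    refine ⟨rep c + v, ?_, ((Submodule.Quotient.eq W).2 (by simpa using hvW)).trans (hrep c)⟩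
    simpa [Real.dist_eq, add_comm] using hv
  choose τ hτ hτc using fun c => hcoset c _ (hδ (k c))
  refine ⟨ℝ ⧸ W, inferInstance, k, τ, hk, hτ, fun c c' hcc' hmem => hcc' ?_⟩
  rw [← hτc c, ← hτc c', Submodule.Quotient.eq]
  exact hΓW hmem

theorem liYorkePair_of_sub_mem {R X : Type*} [Semiring R] [AddCommGroup X] [Module R X]
    [PseudoMetricSpace X] [ContinuousAdd X] [ContinuousConstSMul R X] [IsIsometricVAdd Xᵃᵒᵖ X]
    (T : X →L[R] X) {m : ℕ → ℕ} (hm : StrictMono m) {x y : X}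
    (hmem : x - y ∈ tendstoZeroSubmodule (fun i => T ^ m i) atTop)
    (hnotMem : x - y ∉ tendstoZeroSubmodule (fun n => T ^ n) atTop) :
    LiYorkePair T x y := by
  have hdist : ∀ n, edist (T^[n] x) (T^[n] y) = edist ((T ^ n) (x - y)) 0 := fun n => by
    rw [← FunLike.coe_pow_eq_iterate, map_sub, ← sub_self ((T ^ n) y), edist_sub_right]
  simp only [LiYorkePair, hdist]
  refine ⟨le_antisymm ?_ zero_le, pos_iff_ne_zero.2 fun h => hnotMem ?_⟩
  · calc liminf (fun n => edist ((T ^ n) (x - y)) 0) atTop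
        ≤ liminf ((fun n => edist ((T ^ n) (x - y)) 0) ∘ m) atTop :=
          hm.tendsto_atTop.liminf_le_liminf_comp
      _ = 0 := (tendsto_iff_edist_tendsto_0.1 hmem).liminf_eq
  · exact tendsto_iff_edist_tendsto_0.2
      (tendsto_of_le_liminf_of_limsup_le zero_le h.le)

theorem Submodule.setOf_ofReal_smul_add_mem_subsingleton {𝕂 X : Type*} [RCLike 𝕂]
    [AddCommGroup X] [Module 𝕂 X] (N : Submodule 𝕂 X) {y : X} (hyN : y ∉ N) (z : X) :
    {τ : ℝ | (τ : 𝕂) • y + z ∈ N}.Subsingleton := by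
  intro τ hτ τ' hτ'
  by_contra hne
  have hdiff := N.smul_mem ((τ - τ' : ℝ) : 𝕂)⁻¹ (N.sub_mem hτ hτ')
  rw [add_sub_add_right_eq_sub, ← sub_smul, ← RCLike.ofReal_sub, smul_smul,
    inv_mul_cancel₀ (RCLike.ofReal_ne_zero.2 (sub_ne_zero.2 hne)), one_smul] at hdiff
  exact hyN hdiff

section DenseScrambledSet

variable {𝕂 X : Type*} [RCLike 𝕂] [AddCommGroup X] [Module 𝕂 X] [PseudoMetricSpace X]
  [ContinuousAdd X] [ContinuousSMul 𝕂 X]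

theorem exists_dense_uncountable_pairwise_sub_notMem [TopologicalSpace.SeparableSpace X]
    {N Y : Submodule 𝕂 X} (hY : Dense (Y : Set X)) {y : X} (hyY : y ∈ Y) (hyN : y ∉ N) :
    ∃ S ⊆ (Y : Set X), Dense S ∧ ¬ S.Countable ∧ S.Pairwise fun x x' => x - x' ∉ N := by
  obtain ⟨D, hDY, hDc, hDd⟩ := hY.exists_countable_dense_subset
  obtain ⟨r, rfl⟩ := hDc.exists_eq_range hDd.nonempty
  have hΓ : (⋃ a, ⋃ b, {τ : ℝ | (τ : 𝕂) • y + (r a - r b) ∈ N}).Countable :=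
    Set.countable_iUnion fun a => Set.countable_iUnion fun b =>
      (N.setOf_ofReal_smul_add_mem_subsingleton hyN _).countable
  have hsmall : ∀ p : ℕ × ℕ, ∃ δ > 0, ∀ τ : ℝ, |τ| < δ →
      dist ((τ : 𝕂) • y + r p.1) (r p.1) < 1 / (p.2 + 1) := by
    intro p
    have hcont : Continuous fun τ : ℝ => (τ : 𝕂) • y + r p.1 := by fun_prop
    simpa [Real.dist_eq] using Metric.continuous_iff.1 hcont 0 _ Nat.one_div_pos_of_nat
  choose δ hδ hδy using hsmall
  obtain ⟨I, _, k, τ, hk, hτ, hτΓ⟩ := exists_uncountable_family_sub_notMem hΓ δ hδ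
  set F : I → X := fun i => (τ i : 𝕂) • y + r (k i).1
  have hFclose : ∀ i, dist (F i) (r (k i).1) < 1 / ((k i).2 + 1) := fun i => hδy _ _ (hτ i)
  have hFN : Pairwise fun i j => F i - F j ∉ N := by
    intro i j hij hmem
    refine hτΓ hij (Set.mem_iUnion₂.2 ⟨(k i).1, (k j).1, ?_⟩)
    simp only [F, Set.mem_ofPred_eq, RCLike.ofReal_sub, sub_smul] at hmem ⊢
    convert hmem using 1
    abel
  have hFinj : F.Injective := fun i j hij => by_contra fun hne => hFN hne (by simp [hij])
  refine ⟨Set.range F, ?_, ?_, ?_, ?_⟩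
  · rintro _ ⟨i, rfl⟩
    exact Y.add_mem (Y.smul_mem _ hyY) (hDY ⟨(k i).1, rfl⟩)
  · refine dense_closure.1 (hDd.mono ?_)
    rintro _ ⟨a, rfl⟩
    refine Metric.mem_closure_iff.2 fun ε hε => ?_
    obtain ⟨j, hj⟩ := exists_nat_one_div_lt hε
    obtain ⟨i, hi⟩ := hk (a, j)
    have hclose := hFclose i
    rw [hi] at hclose
    exact ⟨F i, ⟨i, rfl⟩, by rw [dist_comm]; exact hclose.trans hj⟩
  · exact fun hS => not_countable (α := I)
      (Set.countable_univ_iff.1 (Set.preimage_range F ▸ hS.preimage hFinj))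
  · rintro _ ⟨i, rfl⟩ _ ⟨j, rfl⟩ hij
    exact hFN fun h => hij (h ▸ rfl)

theorem ContinuousLinearMap.denselyLiYorkeChaotic_of_dense_tendstoZeroSubmodule
    [CompleteSpace X] [TopologicalSpace.SeparableSpace X] [IsIsometricVAdd Xᵃᵒᵖ X]
    (T : X →L[𝕂] X) {m : ℕ → ℕ} (hm : StrictMono m)
    (hdense : Dense (tendstoZeroSubmodule (fun i => T ^ m i) atTop : Set X))
    (hN : tendstoZeroSubmodule (fun n => T ^ n) atTop ≠ ⊤) :
    DenselyLiYorkeChaotic T := by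
  set N := tendstoZeroSubmodule (fun n => T ^ n) atTop
  obtain ⟨x₀, -, hx₀⟩ := SetLike.exists_of_lt (lt_top_iff_ne_top.2 hN)
  obtain ⟨y, hyA, hyN⟩ := N.toAddSubgroup.exists_mem_residual_notMem hx₀
    (residual_setOf_mapClusterPt (fun i => (T ^ m i).continuous) hdense fun x hx => hx)
  obtain ⟨ψ, hψ, hy⟩ := MapClusterPt.tendsto_subseq hyA
  set Y := tendstoZeroSubmodule (fun i => T ^ (m ∘ ψ) i) atTop
  have hY : Dense (Y : Set X) :=
    hdense.mono (tendstoZeroSubmodule_le_comp (fun i => T ^ m i) hψ.tendsto_atTop)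
  obtain ⟨S, hSY, hSd, hSc, hSN⟩ :=
    exists_dense_uncountable_pairwise_sub_notMem (N := N) hY hy hyN
  exact ⟨S, hSd, hSc, fun x hx x' hx' hne =>
    liYorkePair_of_sub_mem T (hm.comp hψ) (Y.sub_mem (hSY hx) (hSY hx')) (hSN hx hx' hne)⟩

end DenseScrambledSet

section BackwardShift

variable {𝕂 X : Type*} [Field 𝕂] [TopologicalSpace 𝕂] [AddCommGroup X] [Module 𝕂 X]
  [TopologicalSpace X] {ι : X →L[𝕂] (ℤ → 𝕂)} {E : ℤ → X} {w : ℤ → 𝕂}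
  {B : X →L[𝕂] X}

theorem shift_apply_basis (hι : Function.Injective ι) (hE : ∀ n, ι (E n) = Pi.single n 1)
    (hB : ∀ (x : X) (n : ℤ), ι (B x) n = w n * ι x (n + 1)) (k : ℤ) :
    B (E k) = w (k - 1) • E (k - 1) := by
  refine hι (funext fun n => ?_)
  rw [hB, map_smul, hE, hE, Pi.smul_apply, smul_eq_mul]
  by_cases hn : n = k - 1
  · simp [hn]
  · rw [Pi.single_eq_of_ne hn, Pi.single_eq_of_ne (by omega)]
    simp

theorem shift_pow_apply_basis (hι : Function.Injective ι) (hE : ∀ n, ι (E n) = Pi.single n 1)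
    (hB : ∀ (x : X) (n : ℤ), ι (B x) n = w n * ι x (n + 1)) (p : ℕ) (k : ℤ) :
    (B ^ p) (E k) = (∏ t ∈ Finset.Ico (k - p) k, w t) • E (k - p) := by
  induction p generalizing k with
  | zero => simp
  | succ p ih =>
    rw [pow_succ, mul_apply_eq_comp, shift_apply_basis hι hE hB, map_smul, ih, smul_smul]
    congr 2
    · rw [show Finset.Ico (k - ↑(p + 1)) k = insert (k - 1) (Finset.Ico (k - 1 - p) (k - 1)) by
          ext; simp; omega, Finset.prod_insert (by simp)]
    · push_cast
      ring

variable [ContinuousAdd X] [ContinuousConstSMul 𝕂 X]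

theorem basis_mem_tendstoZeroSubmodule_of_nonpos (hι : Function.Injective ι)
    (hE : ∀ n, ι (E n) = Pi.single n 1) (hw0 : ∀ n, w n ≠ 0)
    (hB : ∀ (x : X) (n : ℤ), ι (B x) n = w n * ι x (n + 1)) {n : ℕ → ℕ}
    (h0 : E 0 ∈ tendstoZeroSubmodule (fun j => B ^ n j) atTop) {k : ℤ} (hk : k ≤ 0) :
    E k ∈ tendstoZeroSubmodule (fun j => B ^ n j) atTop := by
  obtain ⟨p, rfl⟩ : ∃ p : ℕ, k = -p := ⟨(-k).toNat, by omega⟩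
  have hp := (B ^ p).map_mem_tendstoZeroSubmodule (fun j => Commute.pow_pow_self B p (n j)) h0
  rw [shift_pow_apply_basis hι hE hB, zero_sub] at hp
  exact (Submodule.smul_mem_iff _ (Finset.prod_ne_zero_iff.2 fun t _ => hw0 t)).1 hp

theorem exists_strictMono_basis_mem_tendstoZeroSubmodule [FirstCountableTopology X]
    (hι : Function.Injective ι) (hE : ∀ n, ι (E n) = Pi.single n 1) (hw0 : ∀ n, w n ≠ 0)
    (hB : ∀ (x : X) (n : ℤ), ι (B x) n = w n * ι x (n + 1)) {n : ℕ → ℕ}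
    (hn : StrictMono n)
    (hv : Tendsto (fun i : ℕ => (∏ t ∈ Finset.Icc (-(n i : ℤ)) (-1), w t) • E (-(n i : ℤ)))
      atTop (𝓝 0)) :
    ∃ m : ℕ → ℕ, StrictMono m ∧
      ∀ k, E k ∈ tendstoZeroSubmodule (fun i => B ^ m i) atTop := by
  have h0 : E 0 ∈ tendstoZeroSubmodule (fun j => B ^ n j) atTop := by
    refine hv.congr fun i => ?_
    rw [shift_pow_apply_basis hι hE hB, zero_sub]
    -- over `ℤ`, `Finset.Icc a (-1)` and `Finset.Ico a 0` are the same finset by definition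
    rfl
  have hK : ∀ k, ∀ᶠ K in atTop, Tendsto (fun j => (B ^ (n j + K)) (E k)) atTop (𝓝 0) := by
    intro k
    filter_upwards [eventually_ge_atTop k.toNat] with K hK
    simp only [pow_add, mul_apply_eq_comp, shift_pow_apply_basis hι hE hB K k]
    exact Submodule.smul_mem _ _
      (basis_mem_tendstoZeroSubmodule_of_nonpos hι hE hw0 hB h0 (k := k - K) (by omega))
  obtain ⟨φ, hφ, hφE⟩ := exists_strictMono_forall_tendsto_diagonal hK
  exact ⟨fun i => n (φ i) + i, (hn.comp hφ).add_monotone monotone_id, hφE⟩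

end BackwardShift

theorem bilateral_shift_frechet_dichotomy_general
    {𝕂 X : Type} [RCLike 𝕂] [AddCommGroup X] [Module 𝕂 X]
    [MetricSpace X] [CompleteSpace X] [ContinuousAdd X] [ContinuousSMul 𝕂 X]
    (hinv : ∀ x y z : X, dist (x + z) (y + z) = dist x y)
    -- `X` is a Fréchet sequence space over `ℤ`
    (ι : X →L[𝕂] (ℤ → 𝕂)) (hι : Function.Injective ι)
    -- the canonical vectors belong to `X` and form a basis
    (E : ℤ → X) (hE : ∀ n, ι (E n) = Pi.single n 1)
    (hbasis : ∀ x : X,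
      Tendsto (fun N : ℕ => ∑ m ∈ Finset.Icc (-(N : ℤ)) (N : ℤ), ι x m • E m)
        atTop (nhds x))
    (w : ℤ → 𝕂) (hw0 : ∀ n, w n ≠ 0)
    (B : X →L[𝕂] X) (hB : ∀ (x : X) (n : ℤ), ι (B x) n = w n * ι x (n + 1))
    -- `(w₋ₙ ⋯ w₋₁ e₋ₙ)ₙ` has a subsequence converging to zero
    (hsub : ∃ n : ℕ → ℕ, StrictMono n ∧
      Tendsto (fun i : ℕ =>
          (∏ t ∈ Finset.Icc (-(n i : ℤ)) (-1), w t) • E (-(n i : ℤ)))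
        atTop (nhds 0)) :
    DenselyLiYorkeChaotic (⇑B) ∨
      ∀ x : X, Tendsto (fun n : ℕ => (⇑B)^[n] x) atTop (nhds 0) := by
  have : IsIsometricVAdd Xᵃᵒᵖ X :=
    ⟨fun c => Isometry.of_dist_eq fun x y => hinv x y c.unop⟩
  have hspan : Dense (Submodule.span 𝕂 (Set.range E) : Set X) := fun x =>
    mem_closure_of_tendsto (hbasis x) (Eventually.of_forall fun _ =>
      Submodule.sum_mem _ fun t _ => Submodule.smul_mem _ _ (Submodule.subset_span ⟨t, rfl⟩))
  have : TopologicalSpace.SeparableSpace X := by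
    rw [← TopologicalSpace.isSeparable_univ_iff, ← hspan.closure_eq]
    exact (Set.countable_range E).isSeparable.span.closure
  obtain ⟨n, hn, hv⟩ := hsub
  obtain ⟨m, hm, hEm⟩ := exists_strictMono_basis_mem_tendstoZeroSubmodule hι hE hw0 hB hn hv
  by_cases hN : tendstoZeroSubmodule (fun k => B ^ k) atTop = ⊤
  · refine Or.inr fun x => ?_
    have hx : x ∈ tendstoZeroSubmodule (fun k => B ^ k) atTop := hN ▸ Submodule.mem_top
    simpa only [mem_tendstoZeroSubmodule, FunLike.coe_pow_eq_iterate] using hx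
  · exact Or.inl (B.denselyLiYorkeChaotic_of_dense_tendstoZeroSubmodule hm
      (hspan.mono (Submodule.span_le.2 (Set.range_subset_iff.2 hEm))) hN)

theorem bilateral_shift_frechet_dichotomy
    {𝕂 X : Type} [RCLike 𝕂] [AddCommGroup X] [Module 𝕂 X]
    [MetricSpace X] [CompleteSpace X] [ContinuousAdd X] [ContinuousSMul 𝕂 X]
    [Module ℝ X] [IsScalarTower ℝ 𝕂 X] [LocallyConvexSpace ℝ X]
    (hinv : ∀ x y z : X, dist (x + z) (y + z) = dist x y)
    -- `X` is a Fréchet sequence space over `ℤ`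
    (ι : X →L[𝕂] (ℤ → 𝕂)) (hι : Function.Injective ι)
    -- the canonical vectors belong to `X` and form a basis
    (E : ℤ → X) (hE : ∀ n, ι (E n) = Pi.single n 1)
    (hbasis : ∀ x : X,
      Tendsto (fun N : ℕ => ∑ m ∈ Finset.Icc (-(N : ℤ)) (N : ℤ), ι x m • E m)
        atTop (nhds x))
    (w : ℤ → 𝕂) (hw0 : ∀ n, w n ≠ 0)
    (B : X →L[𝕂] X) (hB : ∀ (x : X) (n : ℤ), ι (B x) n = w n * ι x (n + 1))
    -- `(w₋ₙ ⋯ w₋₁ e₋ₙ)ₙ` has a subsequence converging to zero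
    (hsub : ∃ n : ℕ → ℕ, StrictMono n ∧
      Tendsto (fun i : ℕ =>
          (∏ t ∈ Finset.Icc (-(n i : ℤ)) (-1), w t) • E (-(n i : ℤ)))
        atTop (nhds 0)) :
    DenselyLiYorkeChaotic (⇑B) ∨
      ∀ x : X, Tendsto (fun n : ℕ => (⇑B)^[n] x) atTop (nhds 0) :=
  bilateral_shift_frechet_dichotomy_general hinv ι hι E hE hbasis w hw0 B hB hsub
end
end
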